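/- If (p₁*,…,pₙ*) maximizes ∑_{m=1}^n h(p_m) over [0,1]^n subject to ∑_{m=1}^n p_m/m = x, where 0 < x < (1/2)∑_{m=1}^n 1/m, then there exists a real constant c' such that p_m* = 1/(1 + e^{c'/m}) for every m ∈ [n]. -/

import Mathlib

/-!
Binary entropy is strictly concave with `h'(q) = log ((1 - q) / q)`, and for the logistic value
`q = σ(t)` this slope is exactly `-t`. Hence for the profile `q_m = σ(c / m)` the tangent planes
give `∑ h(p_m) ≤ ∑ h(q_m) - c ∑ (p_m - q_m) / m`, strictly unless `p = q`, and the linear term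
vanishes when `p` and `q` satisfy the same constraint. So a feasible logistic profile is the unique
maximizer, and one exists by the intermediate value theorem: `c ↦ ∑ σ(c / m) / m` equals
`(1/2) ∑ 1 / m` at `c = 0` and tends to `0` as `c → -∞`.
-/

/-- Binary entropy function (base 2). -/
noncomputable def binEnt (p : ℝ) : ℝ :=
  -p * Real.logb 2 p - (1 - p) * Real.logb 2 (1 - p)

open Real Finset Filter

lemma StrictConcaveOn.lt_add_mul_sub_of_hasDerivAt {S : Set ℝ} {f : ℝ → ℝ} {f' x y : ℝ}
    (hf : StrictConcaveOn ℝ S f) (hx : x ∈ S) (hy : y ∈ S) (hyx : y ≠ x)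
    (hf' : HasDerivAt f f' x) : f y < f x + f' * (y - x) := by
  rcases hyx.lt_or_gt with hlt | hlt
  · have := hf.lt_slope_of_hasDerivAt hy hx hlt hf'
    rw [slope_def_field, lt_div_iff₀ (sub_pos.2 hlt)] at this
    linarith
  · have := hf.slope_lt_of_hasDerivAt hx hy hlt hf'
    rw [slope_def_field, div_lt_iff₀ (sub_pos.2 hlt)] at this
    linarith

lemma Real.log_one_sub_sigmoid_sub_log_sigmoid (t : ℝ) :
    log (1 - sigmoid t) - log (sigmoid t) = -t := by
  rw [← sigmoid_neg, ← sigmoid_mul_rexp_neg, log_mul (sigmoid_pos t).ne' (exp_pos _).ne',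
    log_exp]
  ring

lemma Real.binEntropy_lt_of_ne_sigmoid {p t : ℝ} (hp : p ∈ Set.Icc 0 1) (hne : p ≠ sigmoid t) :
    binEntropy p < binEntropy (sigmoid t) - t * (p - sigmoid t) := by
  have hderiv : HasDerivAt binEntropy (-t) (sigmoid t) := by
    rw [← log_one_sub_sigmoid_sub_log_sigmoid t]
    exact hasDerivAt_binEntropy (sigmoid_pos t).ne' (sigmoid_lt_one t).ne
  have := strictConcave_binEntropy.lt_add_mul_sub_of_hasDerivAt
    ⟨(sigmoid_pos t).le, (sigmoid_lt_one t).le⟩ hp hne hderiv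
  linarith

section WeightedSums

variable {ι : Type*} {s : Finset ι} {w : ι → ℝ}

lemma sum_binEntropy_lt_of_ne_sigmoid {p : ι → ℝ} {c : ℝ}
    (hp : ∀ i ∈ s, p i ∈ Set.Icc 0 1)
    (hsum : ∑ i ∈ s, p i * w i = ∑ i ∈ s, sigmoid (c * w i) * w i)
    (hne : ∃ i ∈ s, p i ≠ sigmoid (c * w i)) :
    ∑ i ∈ s, binEntropy (p i) < ∑ i ∈ s, binEntropy (sigmoid (c * w i)) := by
  have htangent : ∑ i ∈ s, binEntropy (p i) <
      ∑ i ∈ s, (binEntropy (sigmoid (c * w i)) - c * w i * (p i - sigmoid (c * w i))) := by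
    refine sum_lt_sum (fun i hi => ?_) ?_
    · rcases eq_or_ne (p i) (sigmoid (c * w i)) with h | h
      · simp [h]
      · exact (binEntropy_lt_of_ne_sigmoid (hp i hi) h).le
    · obtain ⟨i, hi, h⟩ := hne
      exact ⟨i, hi, binEntropy_lt_of_ne_sigmoid (hp i hi) h⟩
  have hlin : ∑ i ∈ s, c * w i * (p i - sigmoid (c * w i)) = 0 :=
    calc ∑ i ∈ s, c * w i * (p i - sigmoid (c * w i))
        = c * (∑ i ∈ s, p i * w i - ∑ i ∈ s, sigmoid (c * w i) * w i) := by
          rw [mul_sub, mul_sum, mul_sum, ← sum_sub_distrib]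
          exact sum_congr rfl fun i _ => by ring
      _ = 0 := by rw [hsum, sub_self, mul_zero]
  rwa [sum_sub_distrib, hlin, sub_zero] at htangent

lemma tendsto_sum_sigmoid_mul_atBot (hw : ∀ i ∈ s, 0 ≤ w i) :
    Tendsto (fun c => ∑ i ∈ s, sigmoid (c * w i) * w i) atBot (nhds 0) := by
  rw [← sum_const_zero (s := s)]
  refine tendsto_finsetSum s fun i hi => ?_
  rcases (hw i hi).eq_or_lt with h | h
  · simp [← h]
  · simpa using (tendsto_sigmoid_atBot.comp (tendsto_id.atBot_mul_const h)).mul_const (w i)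

lemma exists_sum_sigmoid_mul_eq (hw : ∀ i ∈ s, 0 ≤ w i) {x : ℝ} (hx0 : 0 < x)
    (hx : x < (∑ i ∈ s, w i) / 2) :
    ∃ c, ∑ i ∈ s, sigmoid (c * w i) * w i = x := by
  have hcont : Continuous fun c => ∑ i ∈ s, sigmoid (c * w i) * w i := by fun_prop
  have h0 : x ≤ ∑ i ∈ s, sigmoid (0 * w i) * w i := by
    simp only [zero_mul, sigmoid_zero, ← mul_sum]; linarith
  obtain ⟨c, hc⟩ := intermediate_value_univ₂_eventually₁ continuous_const hcont h0
    (((tendsto_sum_sigmoid_mul_atBot hw).eventually (gt_mem_nhds hx0)).mono fun _ => le_of_lt)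
  exact ⟨c, hc.symm⟩

end WeightedSums

lemma binEnt_eq_binEntropy_div (p : ℝ) : binEnt p = binEntropy p / log 2 := by
  simp only [binEnt, binEntropy, logb, log_inv]
  ring

lemma Real.one_div_one_add_exp_neg_div_eq_sigmoid (c m : ℝ) :
    1 / (1 + exp (-c / m)) = sigmoid (c * m⁻¹) := by
  rw [sigmoid_def, one_div, neg_div, div_eq_mul_inv]

theorem entropy_maximizer_form_general (n : ℕ) (x : ℝ) (hx0 : 0 < x)
    (hx : x < (1 / 2) * ∑ m ∈ Finset.Icc 1 n, (1 : ℝ) / m)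
    (p : ℕ → ℝ) (hp : ∀ m ∈ Finset.Icc 1 n, p m ∈ Set.Icc (0:ℝ) 1)
    (hpsum : ∑ m ∈ Finset.Icc 1 n, p m / m = x)
    (hmax : ∀ q : ℕ → ℝ, (∀ m ∈ Finset.Icc 1 n, q m ∈ Set.Icc (0:ℝ) 1) →
      (∑ m ∈ Finset.Icc 1 n, q m / m = x) →
      ∑ m ∈ Finset.Icc 1 n, binEnt (q m) ≤ ∑ m ∈ Finset.Icc 1 n, binEnt (p m)) :
    ∃ c' : ℝ, ∀ m ∈ Finset.Icc 1 n, p m = 1 / (1 + Real.exp (c' / m)) := by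
  obtain ⟨c, hc⟩ := exists_sum_sigmoid_mul_eq (s := Icc 1 n) (w := fun m : ℕ => (m : ℝ)⁻¹)
    (fun m _ => inv_nonneg.2 m.cast_nonneg) hx0 (by simpa only [one_div, inv_mul_eq_div] using hx)
  refine ⟨-c, fun m hm => ?_⟩
  rw [Real.one_div_one_add_exp_neg_div_eq_sigmoid]
  by_contra hne
  have hlt := sum_binEntropy_lt_of_ne_sigmoid (w := fun m : ℕ => (m : ℝ)⁻¹) hp
    (by simpa only [div_eq_mul_inv, hc] using hpsum) ⟨m, hm, hne⟩
  have hle := hmax (fun m => sigmoid (c * (m : ℝ)⁻¹))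
    (fun m _ => ⟨(sigmoid_pos _).le, (sigmoid_lt_one _).le⟩)
    (by simpa only [div_eq_mul_inv] using hc)
  simp only [binEnt_eq_binEntropy_div, ← sum_div] at hle
  exact hlt.not_ge ((div_le_div_iff_of_pos_right (log_pos one_lt_two)).1 hle)

/-- If `p*` maximizes `∑_{m=1}^n h(p_m)` over `[0,1]^n` subject to
`∑_{m=1}^n p_m/m = x`, where `0 < x < (1/2)∑_{m=1}^n 1/m`, then there is a
real `c'` with `p*_m = 1/(1 + e^{c'/m})` for all `1 ≤ m ≤ n`. -/
theorem entropy_maximizer_form (n : ℕ) (hn : 0 < n) (x : ℝ) (hx0 : 0 < x)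
    (hx : x < (1 / 2) * ∑ m ∈ Finset.Icc 1 n, (1 : ℝ) / m)
    (p : ℕ → ℝ) (hp : ∀ m ∈ Finset.Icc 1 n, p m ∈ Set.Icc (0:ℝ) 1)
    (hpsum : ∑ m ∈ Finset.Icc 1 n, p m / m = x)
    (hmax : ∀ q : ℕ → ℝ, (∀ m ∈ Finset.Icc 1 n, q m ∈ Set.Icc (0:ℝ) 1) →
      (∑ m ∈ Finset.Icc 1 n, q m / m = x) →
      ∑ m ∈ Finset.Icc 1 n, binEnt (q m) ≤ ∑ m ∈ Finset.Icc 1 n, binEnt (p m)) :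
    ∃ c' : ℝ, ∀ m ∈ Finset.Icc 1 n, p m = 1 / (1 + Real.exp (c' / m)) :=
  entropy_maximizer_form_general n x hx0 hx p hp hpsum hmax
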